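/- arXiv:2102.05495 — 3 statements merged into one kernel-verified Lean document; each statement's English description precedes it below -/
import Mathlib

section
/- Let Ω, Σ : ℝ → ℝ be differentiable functions satisfying the γ = 1 averaged Bianchi I system dΩ/dτ = (3/2)Σ(τ)²Ω(τ) and dΣ/dτ = −(3/2)Σ(τ)(1 − Σ(τ)²), with Ω(τ) > 0 for all τ. Then: (i) the quantity (1 − Σ(τ)²)/Ω(τ)² is constant in τ, so the orbits satisfy Σ(τ)² = 1 − (1 − Σ₀²)Ω(τ)²/Ω₀², where Ω₀ = Ω(0), Σ₀ = Σ(0); and (ii) Σ(τ)²/Ω(τ)² = (Σ₀²/Ω₀²) e^{−3τ} for all τ. -/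
/-! Division subtracts logarithmic derivatives. Along the flow `(log Ω²)' = 3Σ² = (log (1 − Σ²))'`
and `(log Σ²)' = −3(1 − Σ²)`, so `(1 − Σ²)/Ω²` has logarithmic derivative `0` and `Σ²/Ω²` has
logarithmic derivative `−3`. -/

open Real

theorem HasDerivAt.div_of_mul {u v : ℝ → ℝ} {a b t : ℝ} (hu : HasDerivAt u (a * u t) t)
    (hv : HasDerivAt v (b * v t) t) (hvt : v t ≠ 0) :
    HasDerivAt (fun s => u s / v s) ((a - b) * (u t / v t)) t :=
  (hu.div hv hvt).congr_deriv (by field_simp)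

theorem eq_mul_exp_of_hasDerivAt_mul {f : ℝ → ℝ} {c : ℝ} (hf : ∀ t, HasDerivAt f (c * f t) t)
    (t : ℝ) : f t = f 0 * exp (c * t) := by
  have hexp (s : ℝ) : HasDerivAt (fun s => exp (c * s)) (c * exp (c * s)) s := by
    simpa [mul_comm] using ((hasDerivAt_id s).const_mul c).exp
  have hquot (s : ℝ) : HasDerivAt (fun s => f s / exp (c * s)) 0 s := by
    simpa using (hf s).div_of_mul (hexp s) (exp_pos _).ne'
  have h := is_const_of_deriv_eq_zero (fun s => (hquot s).differentiableAt)
    (fun s => (hquot s).deriv) t 0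
  rw [div_eq_iff (exp_pos _).ne'] at h
  simpa using h

/-- For the `γ = 1` averaged Bianchi I system
`Ω' = (3/2)Σ²Ω`, `Σ' = −(3/2)Σ(1 − Σ²)` with `Ω > 0`:
(i) `(1 − Σ²)/Ω²` is a conserved quantity, so the orbits satisfy
`Σ(τ)² = 1 − (1 − Σ₀²)Ω(τ)²/Ω₀²`; and (ii) `Σ²/Ω² = (Σ₀²/Ω₀²) e^{−3τ}`. -/
theorem bianchiI_dust_orbits
    (Ω S : ℝ → ℝ)
    (hΩpos : ∀ τ : ℝ, Ω τ > 0)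
    (hΩ : ∀ τ : ℝ, HasDerivAt Ω ((3/2) * S τ ^ 2 * Ω τ) τ)
    (hS : ∀ τ : ℝ, HasDerivAt S (-(3/2) * S τ * (1 - S τ ^ 2)) τ) :
    (∀ τ : ℝ, (1 - S τ ^ 2) / Ω τ ^ 2 = (1 - S 0 ^ 2) / Ω 0 ^ 2) ∧
    (∀ τ : ℝ, S τ ^ 2 = 1 - (1 - S 0 ^ 2) * Ω τ ^ 2 / Ω 0 ^ 2) ∧
    (∀ τ : ℝ, S τ ^ 2 / Ω τ ^ 2 = (S 0 ^ 2 / Ω 0 ^ 2) * Real.exp (-3 * τ)) := by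
  have hΩsq_ne (τ : ℝ) : Ω τ ^ 2 ≠ 0 := pow_ne_zero 2 (hΩpos τ).ne'
  have hΩsq (τ : ℝ) : HasDerivAt (fun τ => Ω τ ^ 2) (3 * S τ ^ 2 * Ω τ ^ 2) τ :=
    ((hΩ τ).pow 2).congr_deriv (by ring)
  have hSsq (τ : ℝ) : HasDerivAt (fun τ => S τ ^ 2) (-3 * (1 - S τ ^ 2) * S τ ^ 2) τ :=
    ((hS τ).pow 2).congr_deriv (by ring)
  have hOneSubSsq (τ : ℝ) : HasDerivAt (fun τ => 1 - S τ ^ 2) (3 * S τ ^ 2 * (1 - S τ ^ 2)) τ :=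
    ((hSsq τ).const_sub 1).congr_deriv (by ring)
  have hconserved (τ : ℝ) : (1 - S τ ^ 2) / Ω τ ^ 2 = (1 - S 0 ^ 2) / Ω 0 ^ 2 := by
    have hquot (τ : ℝ) : HasDerivAt (fun τ => (1 - S τ ^ 2) / Ω τ ^ 2) 0 τ := by
      simpa using (hOneSubSsq τ).div_of_mul (hΩsq τ) (hΩsq_ne τ)
    exact is_const_of_deriv_eq_zero (fun τ => (hquot τ).differentiableAt)
      (fun τ => (hquot τ).deriv) τ 0
  have hdecay (τ : ℝ) : HasDerivAt (fun τ => S τ ^ 2 / Ω τ ^ 2) (-3 * (S τ ^ 2 / Ω τ ^ 2)) τ :=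
    ((hSsq τ).div_of_mul (hΩsq τ) (hΩsq_ne τ)).congr_deriv (by ring)
  refine ⟨hconserved, fun τ => ?_, eq_mul_exp_of_hasDerivAt_mul hdecay⟩
  have h := hconserved τ
  rw [div_eq_iff (hΩsq_ne τ)] at h
  rw [mul_div_right_comm, ← h]
  ring
end

section
/- Let γ be a real number and Ω₀ ∈ (0, 1). Define Ω̄(τ) = Ω₀ e^{3γτ/2} / √( Ω₀² e^{3γτ} + e^{3τ}(1 − Ω₀²) ) for τ ∈ ℝ. Then the expression under the square root is positive for all τ, Ω̄(0) = Ω₀, and Ω̄ is differentiable with dΩ̄/dτ = −(3/2)(γ − 1) Ω̄(τ) ( Ω̄(τ)² − 1 ) for all τ ∈ ℝ. -/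
/-!
Dividing numerator and radicand by `e^{3γτ}` turns the solution into
`Ω̄(τ) = Ω₀ / √(Ω₀² + (1 − Ω₀²) e^{3(1−γ)τ})`. For any `C, B, c` the function
`x = C / √(C² + B e^{cτ})` satisfies `1 − x² = B e^{cτ} / (C² + B e^{cτ})`, so differentiating
the square root gives the Bernoulli equation `x' = −(c/2) x (1 − x²)`; with `c = 3(1 − γ)` this is
the averaged equation.
-/

open Real

noncomputable def bernoulliSolution (C B c t : ℝ) : ℝ :=
  C / √(C ^ 2 + B * exp (c * t))

theorem bernoulliSolution_zero (C B : ℝ) (h : C ^ 2 + B = 1) (c : ℝ) :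
    bernoulliSolution C B c 0 = C := by
  simp [bernoulliSolution, h]

theorem hasDerivAt_bernoulliSolution {C B c τ : ℝ} (h : 0 < C ^ 2 + B * exp (c * τ)) :
    HasDerivAt (bernoulliSolution C B c)
      (-(c / 2) * bernoulliSolution C B c τ * (1 - bernoulliSolution C B c τ ^ 2)) τ := by
  have hlin : HasDerivAt (fun t => c * t) c τ := by
    simpa using (hasDerivAt_id τ).const_mul c
  have hrad : HasDerivAt (fun t => C ^ 2 + B * exp (c * t)) (B * (exp (c * τ) * c)) τ :=
    (hlin.exp.const_mul B).const_add _
  have hsqrt_pos : 0 < √(C ^ 2 + B * exp (c * τ)) := sqrt_pos.2 h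
  refine ((hasDerivAt_const τ C).div (hrad.sqrt h.ne') hsqrt_pos.ne').congr_deriv ?_
  simp only [bernoulliSolution]
  field_simp
  rw [sq_sqrt h.le]
  ring

theorem mul_exp_half_div_sqrt_eq (C B a b : ℝ) :
    C * exp (a / 2) / √(C ^ 2 * exp a + exp b * B) = C / √(C ^ 2 + B * exp (b - a)) := by
  have hrad : C ^ 2 * exp a + exp b * B = exp a * (C ^ 2 + B * exp (b - a)) := by
    rw [exp_sub]; field_simp
  rw [hrad, sqrt_mul (exp_pos a).le, ← exp_half, mul_comm (exp (a / 2)),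
    mul_div_mul_right _ _ (exp_pos _).ne']

/-- The explicit function
`Ω̄(τ) = Ω₀ e^{3γτ/2} / √(Ω₀² e^{3γτ} + e^{3τ}(1 − Ω₀²))` is well defined (the radicand
is positive), satisfies `Ω̄(0) = Ω₀`, and solves `dΩ̄/dτ = −(3/2)(γ−1)Ω̄(Ω̄² − 1)`. -/
theorem flatFLRW_averaged_solution
    (γ Ω₀ : ℝ) (hΩ₀ : Ω₀ ∈ Set.Ioo (0 : ℝ) 1)
    (Ω : ℝ → ℝ)
    (hΩ : ∀ τ : ℝ, Ω τ = Ω₀ * Real.exp (3 * γ * τ / 2) /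
      Real.sqrt (Ω₀ ^ 2 * Real.exp (3 * γ * τ) + Real.exp (3 * τ) * (1 - Ω₀ ^ 2))) :
    (∀ τ : ℝ, 0 < Ω₀ ^ 2 * Real.exp (3 * γ * τ) + Real.exp (3 * τ) * (1 - Ω₀ ^ 2)) ∧
    Ω 0 = Ω₀ ∧
    (∀ τ : ℝ, HasDerivAt Ω (-(3/2) * (γ - 1) * Ω τ * (Ω τ ^ 2 - 1)) τ) := by
  obtain ⟨hΩ₀_pos, hΩ₀_lt⟩ := hΩ₀
  have hB : 0 < 1 - Ω₀ ^ 2 := by nlinarith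
  have hΩ_eq : Ω = bernoulliSolution Ω₀ (1 - Ω₀ ^ 2) (3 * (1 - γ)) := by
    funext τ
    rw [hΩ, mul_exp_half_div_sqrt_eq, bernoulliSolution]
    ring_nf
  rw [hΩ_eq]
  refine ⟨fun τ => by positivity, bernoulliSolution_zero _ _ (by ring) _, fun τ => ?_⟩
  convert hasDerivAt_bernoulliSolution (C := Ω₀) (B := 1 - Ω₀ ^ 2) (c := 3 * (1 - γ)) (τ := τ)
    (by positivity) using 1
  ring
end

section
/- Let H₀ > 0 and ω > 0, and define H(t) = 4H₀ω / (6H₀tω + 3H₀ sin(2tω) + 4ω) for t ≥ 0. Then the denominator is positive for all t ≥ 0, H(0) = H₀, H is differentiable with H'(t) = −3 H(t)² cos²(ωt) for all t ≥ 0, and t·H(t) → 2/3 as t → +∞ (i.e. H(t) ∼ 2/(3t) for large t). -/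
/-!
Writing `D(t) = 6H₀ωt + 3H₀ sin(2ωt) + 4ω` for the denominator, `cos(2ωt) = 2cos²(ωt) - 1` gives
`D' = 12H₀ω cos²(ωt)`, so `H = 4H₀ω / D` satisfies `H' = -4H₀ω D' / D² = -3H² cos²(ωt)`.
Since `|sin x| ≤ x` for `x ≥ 0`, `D(t) ≥ 4ω > 0` on `[0, ∞)`; and `D(t) = 6H₀ωt + O(1)`,
so `t H(t) = 4H₀ω / (D(t)/t) → 4H₀ω / (6H₀ω) = 2/3`.
-/

open Filter Real Topology

namespace ScalarFieldDominated

noncomputable def denom (H₀ ω t : ℝ) : ℝ :=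
  6 * H₀ * t * ω + 3 * H₀ * sin (2 * t * ω) + 4 * ω

variable {H₀ ω t : ℝ}

lemma denom_pos (hH₀ : 0 ≤ H₀) (hω : 0 < ω) (ht : 0 ≤ t) : 0 < denom H₀ ω t := by
  have hsin : -(2 * t * ω) ≤ sin (2 * t * ω) := by
    have := abs_sin_le_abs (x := 2 * t * ω)
    rw [abs_of_nonneg (by positivity : 0 ≤ 2 * t * ω)] at this
    exact neg_le_of_abs_le this
  unfold denom
  nlinarith [mul_le_mul_of_nonneg_left hsin (by positivity : 0 ≤ 3 * H₀)]

lemma hasDerivAt_denom (H₀ ω t : ℝ) :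
    HasDerivAt (denom H₀ ω) (12 * H₀ * ω * cos (ω * t) ^ 2) t := by
  have hsin : HasDerivAt (fun t => sin (2 * t * ω)) (cos (2 * t * ω) * (2 * ω)) t := by
    simpa [Function.comp_def] using
      (hasDerivAt_sin _).comp t (((hasDerivAt_id t).const_mul 2).mul_const ω)
  refine ((((hasDerivAt_id t).const_mul (6 * H₀)).mul_const ω).add
    (hsin.const_mul (3 * H₀))).add_const (4 * ω) |>.congr_deriv ?_
  rw [show 2 * t * ω = 2 * (ω * t) by ring, cos_two_mul]
  ring

lemma hasDerivAt_const_div_denom (hD : denom H₀ ω t ≠ 0) :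
    HasDerivAt (fun t => 4 * H₀ * ω / denom H₀ ω t)
      (-3 * (4 * H₀ * ω / denom H₀ ω t) ^ 2 * cos (ω * t) ^ 2) t := by
  refine (hasDerivAt_const t (4 * H₀ * ω)).div (hasDerivAt_denom H₀ ω t) hD |>.congr_deriv ?_
  field_simp
  ring

lemma tendsto_denom_div_atTop (H₀ ω : ℝ) :
    Tendsto (fun t => denom H₀ ω t / t) atTop (𝓝 (6 * H₀ * ω)) := by
  have hbounded : Tendsto (fun t => (3 * H₀ * sin (2 * t * ω) + 4 * ω) / t) atTop (𝓝 0) :=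
    tendsto_bdd_div_atTop_nhds_zero (b := -3 * |H₀| + 4 * ω) (B := 3 * |H₀| + 4 * ω)
      (.of_forall fun t => by
        nlinarith [neg_one_le_sin (2 * t * ω), sin_le_one (2 * t * ω), neg_abs_le H₀,
          le_abs_self H₀])
      (.of_forall fun t => by
        nlinarith [neg_one_le_sin (2 * t * ω), sin_le_one (2 * t * ω), neg_abs_le H₀,
          le_abs_self H₀])
      tendsto_id
  have hsum := (tendsto_const_nhds (x := 6 * H₀ * ω)).add hbounded
  rw [add_zero] at hsum
  refine hsum.congr' ?_
  filter_upwards [eventually_gt_atTop 0] with t ht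
  unfold denom
  field_simp
  ring

end ScalarFieldDominated

open ScalarFieldDominated in
/-- The explicit function
`H(t) = 4H₀ω/(6H₀tω + 3H₀ sin(2tω) + 4ω)` has positive denominator for `t ≥ 0`,
satisfies `H(0) = H₀` and `H' = −3H² cos²(ωt)` on `[0, ∞)`, and `t·H(t) → 2/3` as
`t → +∞`. -/
theorem scalar_field_dominated_H_asymptotics
    (H₀ ω : ℝ) (hH₀ : 0 < H₀) (hω : 0 < ω)
    (H : ℝ → ℝ)
    (hHdef : ∀ t : ℝ, H t = 4 * H₀ * ω / (6 * H₀ * t * ω + 3 * H₀ * Real.sin (2 * t * ω) + 4 * ω)) :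
    (∀ t : ℝ, 0 ≤ t → 0 < 6 * H₀ * t * ω + 3 * H₀ * Real.sin (2 * t * ω) + 4 * ω) ∧
    H 0 = H₀ ∧
    (∀ t : ℝ, 0 ≤ t → HasDerivAt H (-3 * H t ^ 2 * Real.cos (ω * t) ^ 2) t) ∧
    Tendsto (fun t : ℝ => t * H t) atTop (nhds (2/3)) := by
  have hH : H = fun t => 4 * H₀ * ω / denom H₀ ω t := funext hHdef
  subst hH
  refine ⟨fun t ht => denom_pos hH₀.le hω ht, ?_, fun t ht => ?_, ?_⟩
  · simp only [denom, mul_zero, zero_mul, sin_zero, zero_add]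
    field_simp
  · exact hasDerivAt_const_div_denom (denom_pos hH₀.le hω ht).ne'
  · have hlim := (tendsto_const_nhds (x := 4 * H₀ * ω)).div (tendsto_denom_div_atTop H₀ ω)
      (by positivity)
    rw [show 4 * H₀ * ω / (6 * H₀ * ω) = 2 / 3 by field_simp; ring] at hlim
    refine hlim.congr' ?_
    filter_upwards [eventually_gt_atTop 0] with t ht
    simp only [Pi.div_apply]
    field_simp
end
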